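/- arXiv:2512.19071 — 8 statements merged into one kernel-verified Lean document; each statement's English description precedes it below -/
import Mathlib

section
/- For every even integer f ≥ 10, the quadruple (α, β, γ, δ) = (4π/f, (f−4)π/f, 4π/f, π) is a good rational quadruple for f, satisfies α + β + δ = 2π and γ = 4π/f, and satisfies equation (E). -/
open Real

/-- Equation (E): `sin(α − γ/2) · sin(β/2) = sin(γ/2) · sin(δ − β/2)`. -/
def eqE (α β γ δ : ℝ) : Prop :=
  Real.sin (α - γ / 2) * Real.sin (β / 2) = Real.sin (γ / 2) * Real.sin (δ - β / 2)

/-- `(α, β, γ, δ)` is a good rational quadruple for the even integer `f ≥ 6`. -/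
def goodQuad (f : ℤ) (α β γ δ : ℝ) : Prop :=
  Even f ∧ 6 ≤ f ∧
  (∃ q : ℚ, α = q * π) ∧ (∃ q : ℚ, β = q * π) ∧
  (∃ q : ℚ, γ = q * π) ∧ (∃ q : ℚ, δ = q * π) ∧
  α ∈ Set.Ioo 0 (2 * π) ∧ β ∈ Set.Ioo 0 (2 * π) ∧
  γ ∈ Set.Ioo 0 (2 * π) ∧ δ ∈ Set.Ioo 0 (2 * π) ∧
  α + β + γ + δ = 2 * π + 4 * π / (f : ℝ) ∧
  α ≠ δ ∧ β ≠ γ ∧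
  ¬(π ≤ α ∧ π ≤ β) ∧ ¬(π ≤ α ∧ π ≤ γ) ∧ ¬(π ≤ α ∧ π ≤ δ) ∧
  ¬(π ≤ β ∧ π ≤ γ) ∧ ¬(π ≤ β ∧ π ≤ δ) ∧ ¬(π ≤ γ ∧ π ≤ δ) ∧
  (β < γ ↔ δ < α) ∧ (β = δ ↔ α = π) ∧
  (δ ≤ π → π < 2 * α + β ∧ π < β + 2 * γ) ∧
  ((α < π ∧ β < π ∧ γ < π ∧ δ < π) →
    (δ < β ↔ α < γ) ∧ α + δ < π + β ∧ α + δ < π + γ ∧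
    α + β < π + δ ∧ γ + δ < π + α)

/-! With `a = 4π/f < π/2` (as `f > 8`) the quadruple is `(a, π - a, a, π)`. Every condition of
goodness is then a linear inequality in `a` and `π`, only `δ = π` reaching `π`, and (E) collapses
to `sin (π - x) = sin x` since `α - γ/2 = γ/2`. -/

theorem eqE_self_pi_sub_self_pi (a : ℝ) : eqE a (π - a) a π := by
  rw [eqE, sub_half, sin_pi_sub]

theorem goodQuad_four_pi_div {f : ℤ} (hf : Even f) (hf8 : 8 < f) :
    goodQuad f (4 * π / f) (π - 4 * π / f) (4 * π / f) π := by
  have hf8' : (8 : ℝ) < f := by exact_mod_cast hf8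
  have hpi := pi_pos
  have ha0 : 0 < 4 * π / f := by positivity
  have ha : 4 * π / f < π / 2 := by
    rw [div_lt_iff₀ (by linarith)]
    nlinarith
  refine ⟨hf, by omega, ⟨4 / f, by push_cast; ring⟩, ⟨1 - 4 / f, by push_cast; ring⟩,
    ⟨4 / f, by push_cast; ring⟩, ⟨1, by simp⟩, ?_⟩
  simp only [Set.mem_Ioo]
  and_intros <;> first
    | linarith
    | exact iff_of_false (by linarith) (by linarith)
    | intro h; linarith [h.1]
    | intros; constructor <;> linarith

theorem stmt_1 (f : ℤ) (hf : Even f) (hf10 : 10 ≤ f) :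
    goodQuad f (4 * π / (f : ℝ)) (((f : ℝ) - 4) * π / (f : ℝ)) (4 * π / (f : ℝ)) π ∧
    4 * π / (f : ℝ) + ((f : ℝ) - 4) * π / (f : ℝ) + π = 2 * π ∧
    (4 * π / (f : ℝ)) = 4 * π / (f : ℝ) ∧
    eqE (4 * π / (f : ℝ)) (((f : ℝ) - 4) * π / (f : ℝ)) (4 * π / (f : ℝ)) π := by
  have hf0 : (f : ℝ) ≠ 0 := by exact_mod_cast (show f ≠ 0 by omega)
  have hβ : ((f : ℝ) - 4) * π / f = π - 4 * π / f := by field_simp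
  rw [hβ]
  exact ⟨goodQuad_four_pi_div hf (by omega), by ring, rfl, eqE_self_pi_sub_self_pi _⟩
end

section
/- For every even integer f ≥ 6, the quadruple (α, β, γ, δ) = (2π/f, (4f−4)π/(3f), 4π/f, (2f−2)π/(3f)) is a good rational quadruple for f, satisfies α + β + δ = 2π and γ = 4π/f, and satisfies equation (E). -/
open Real

/-
Both sides of (E) vanish, since `α = γ / 2` and `δ = β / 2`. The angle `β` is the only one
exceeding `π`, which settles the "at most one angle `≥ π`" conditions and makes the
remaining clauses of `goodQuad` immediate; what is left are inequalities between the
coefficients of `π`, all of which hold as soon as `f > 4`.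
-/

lemma eqE_of_eq_half {α β γ δ : ℝ} (hα : α = γ / 2) (hδ : δ = β / 2) : eqE α β γ δ := by
  simp only [eqE, hα, hδ, sub_self, Real.sin_zero, zero_mul, mul_zero]

lemma goodQuad_of_pi_lt_snd {f : ℤ} {α β γ δ : ℝ} (hf : Even f) (hf6 : 6 ≤ f)
    (hαq : ∃ q : ℚ, α = q * π) (hβq : ∃ q : ℚ, β = q * π)
    (hγq : ∃ q : ℚ, γ = q * π) (hδq : ∃ q : ℚ, δ = q * π)
    (hα0 : 0 < α) (hγ0 : 0 < γ) (hδ0 : 0 < δ)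
    (hαπ : α < π) (hγπ : γ < π) (hδπ : δ < π) (hπβ : π < β) (hβ2π : β < 2 * π)
    (hsum : α + β + γ + δ = 2 * π + 4 * π / (f : ℝ)) (hαδ : α < δ) :
    goodQuad f α β γ δ := by
  have := pi_pos
  refine ⟨hf, hf6, hαq, hβq, hγq, hδq, ?_⟩
  grind

lemma mul_pi_div_lt_pi {a b : ℝ} (hb : 0 < b) (h : a < b) : a * π / b < π := by
  rw [div_lt_iff₀ hb]
  nlinarith [pi_pos]

lemma pi_lt_mul_pi_div {a b : ℝ} (hb : 0 < b) (h : b < a) : π < a * π / b := by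
  rw [lt_div_iff₀ hb]
  nlinarith [pi_pos]

lemma mul_pi_div_lt_mul_pi_div {a b c d : ℝ} (hb : 0 < b) (hd : 0 < d) (h : a * d < c * b) :
    a * π / b < c * π / d := by
  rw [div_lt_div_iff₀ hb hd]
  nlinarith [pi_pos]

theorem stmt_2 (f : ℤ) (hf : Even f) (hf6 : 6 ≤ f) :
    goodQuad f (2 * π / (f : ℝ)) ((4 * (f : ℝ) - 4) * π / (3 * (f : ℝ)))
      (4 * π / (f : ℝ)) ((2 * (f : ℝ) - 2) * π / (3 * (f : ℝ))) ∧
    2 * π / (f : ℝ) + (4 * (f : ℝ) - 4) * π / (3 * (f : ℝ)) +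
      (2 * (f : ℝ) - 2) * π / (3 * (f : ℝ)) = 2 * π ∧
    (4 * π / (f : ℝ)) = 4 * π / (f : ℝ) ∧
    eqE (2 * π / (f : ℝ)) ((4 * (f : ℝ) - 4) * π / (3 * (f : ℝ)))
      (4 * π / (f : ℝ)) ((2 * (f : ℝ) - 2) * π / (3 * (f : ℝ))) := by
  have hx : (4 : ℝ) < f := by exact_mod_cast (by omega : (4 : ℤ) < f)
  have hx0 : (0 : ℝ) < f := by linarith
  have h3x : (0 : ℝ) < 3 * f := by linarith
  have hsum : 2 * π / (f : ℝ) + (4 * (f : ℝ) - 4) * π / (3 * (f : ℝ)) +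
      (2 * (f : ℝ) - 2) * π / (3 * (f : ℝ)) = 2 * π := by
    field_simp
    ring
  have hβ2π : (4 * (f : ℝ) - 4) * π / (3 * (f : ℝ)) < 2 * π := by
    rw [div_lt_iff₀ h3x]
    nlinarith [mul_pos hx0 pi_pos]
  refine ⟨goodQuad_of_pi_lt_snd hf hf6 ⟨2 / f, by push_cast; ring⟩
      ⟨(4 * f - 4) / (3 * f), by push_cast; ring⟩ ⟨4 / f, by push_cast; ring⟩
      ⟨(2 * f - 2) / (3 * f), by push_cast; ring⟩ (by positivity) (by positivity)
      (div_pos (mul_pos (by linarith) pi_pos) h3x) (mul_pi_div_lt_pi hx0 (by linarith))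
      (mul_pi_div_lt_pi hx0 hx) (mul_pi_div_lt_pi h3x (by linarith))
      (pi_lt_mul_pi_div h3x (by linarith)) hβ2π (by linarith)
      (mul_pi_div_lt_mul_pi_div hx0 h3x (by nlinarith)),
    hsum, rfl, eqE_of_eq_half (by ring) (by ring)⟩
end

section
/- For every even integer f ≥ 10, the quadruple (α, β, γ, δ) = (2π/f, (2f−4)π/(3f), 4π/f, (4f−2)π/(3f)) is a good rational quadruple for f, satisfies α + β + δ = 2π and γ = 4π/f, and satisfies equation (E). -/
/-! Both sides of (E) vanish: `α - γ/2 = 0` and `δ - β/2 = π`. Of the remaining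
conditions only `γ < β` (equivalent to `f > 8`) uses the bound on `f`; the others follow from
`α, β, γ < π < δ`. -/

open Real

theorem goodQuad_of_lt_pi_lt_delta {f : ℤ} {α β γ δ : ℝ} (hf : Even f) (hf6 : 6 ≤ f)
    (hαq : ∃ q : ℚ, α = q * π) (hβq : ∃ q : ℚ, β = q * π)
    (hγq : ∃ q : ℚ, γ = q * π) (hδq : ∃ q : ℚ, δ = q * π)
    (hα : α ∈ Set.Ioo 0 π) (hβ : β ∈ Set.Ioo 0 π) (hγ : γ ∈ Set.Ioo 0 π)
    (hδ : δ ∈ Set.Ioo π (2 * π)) (hγβ : γ < β)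
    (hsum : α + β + γ + δ = 2 * π + 4 * π / (f : ℝ)) :
    goodQuad f α β γ δ := by
  obtain ⟨hα0, hαπ⟩ := hα
  obtain ⟨hβ0, hβπ⟩ := hβ
  obtain ⟨hγ0, hγπ⟩ := hγ
  obtain ⟨hπδ, hδ2π⟩ := hδ
  have hπ := pi_pos
  refine ⟨hf, hf6, hαq, hβq, hγq, hδq, ⟨hα0, by linarith⟩, ⟨hβ0, by linarith⟩,
    ⟨hγ0, by linarith⟩, ⟨by linarith, hδ2π⟩, hsum, by linarith, hγβ.ne',
    fun h => h.1.not_gt hαπ, fun h => h.1.not_gt hαπ, fun h => h.1.not_gt hαπ,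
    fun h => h.1.not_gt hβπ, fun h => h.1.not_gt hβπ, fun h => h.1.not_gt hγπ,
    iff_of_false hγβ.not_gt (by linarith), iff_of_false (by linarith) hαπ.ne,
    fun h => absurd h hπδ.not_ge, fun h => absurd h.2.2.2 hπδ.not_gt⟩

theorem eqE_of_sin_eq_zero {α β γ δ : ℝ} (h₁ : sin (α - γ / 2) = 0)
    (h₂ : sin (δ - β / 2) = 0) : eqE α β γ δ := by
  rw [eqE, h₁, h₂, zero_mul, mul_zero]

theorem stmt_3 (f : ℤ) (hf : Even f) (hf10 : 10 ≤ f) :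
    goodQuad f (2 * π / (f : ℝ)) ((2 * (f : ℝ) - 4) * π / (3 * (f : ℝ)))
      (4 * π / (f : ℝ)) ((4 * (f : ℝ) - 2) * π / (3 * (f : ℝ))) ∧
    2 * π / (f : ℝ) + (2 * (f : ℝ) - 4) * π / (3 * (f : ℝ)) +
      (4 * (f : ℝ) - 2) * π / (3 * (f : ℝ)) = 2 * π ∧
    (4 * π / (f : ℝ)) = 4 * π / (f : ℝ) ∧
    eqE (2 * π / (f : ℝ)) ((2 * (f : ℝ) - 4) * π / (3 * (f : ℝ)))
      (4 * π / (f : ℝ)) ((4 * (f : ℝ) - 2) * π / (3 * (f : ℝ))) := by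
  have ht : (10 : ℝ) ≤ f := by exact_mod_cast hf10
  have ht0 : (0 : ℝ) < f := by linarith
  have ht3 : (0 : ℝ) < 3 * f := by linarith
  have hπ := pi_pos
  refine ⟨goodQuad_of_lt_pi_lt_delta hf (by omega)
      ⟨2 / f, by push_cast; ring⟩ ⟨(2 * f - 4) / (3 * f), by push_cast; ring⟩
      ⟨4 / f, by push_cast; ring⟩ ⟨(4 * f - 2) / (3 * f), by push_cast; ring⟩
      ⟨by positivity, by rw [div_lt_iff₀ ht0]; nlinarith⟩
      ⟨div_pos (by nlinarith) ht3, by rw [div_lt_iff₀ ht3]; nlinarith⟩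
      ⟨by positivity, by rw [div_lt_iff₀ ht0]; nlinarith⟩
      ⟨by rw [lt_div_iff₀ ht3]; nlinarith, by rw [div_lt_iff₀ ht3]; nlinarith⟩
      (by rw [div_lt_div_iff₀ ht0 ht3]; nlinarith [mul_pos hπ ht0])
      (by field_simp; ring),
    by field_simp; ring, rfl, eqE_of_sin_eq_zero ?_ ?_⟩
  · rw [show 2 * π / (f : ℝ) - 4 * π / f / 2 = 0 by ring, sin_zero]
  · rw [show (4 * (f : ℝ) - 2) * π / (3 * f) - (2 * f - 4) * π / (3 * f) / 2 = π by
      field_simp; ring, sin_pi]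
end

section
/- Let f be an even integer with f ≥ 6 and let (α, β, γ, δ) be a good rational quadruple for f satisfying equation (E), β + 2γ = 2π, and 4δ = 2π. Then f = 16 and (α, β, γ, δ) = (π/4, π, π/2, π/2). -/
/-!
The hypotheses force `δ = π/2`, `β = 2π - 2γ` and `α = γ - π/2 + 2u` with `u = 2π/f`, and
then (E) reduces to `cos 2u = 2 sin u sin (γ + u)`. As `cos 2u = 1 - 2 sin² u`, this says
that `1 / sin u = 2 sin (γ + u) + 2 sin u`, an algebraic integer since `γ` and `u` are
rational multiples of `π`. For `f ≥ 18` the equation fails because `2 sin u < cos 2u`; for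
`f = 6, 10, 14` the number `z = 1 / sin² (π/p)`, `p = f/2`, satisfies `p · P(z) = k` with
`P ∈ ℤ[X]` and `p ∤ k`, so it is not an algebraic integer. For `f = 8, 12, 16` the equation
is an elementary sine equation in `γ`, and the side conditions on a good quadruple rule out
all its solutions except `f = 16`, `γ = π/2`.
-/

open Real

theorem dvd_of_isIntegral_of_intCast_mul_eq {K : Type*} [Field K] [CharZero K] {x : K}
    (hx : IsIntegral ℤ x) {n k : ℤ} (h : (n : K) * x = k) : n ∣ k := by
  rcases eq_or_ne n 0 with rfl | hn
  · have : (k : K) = 0 := by rw [← h]; simp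
    simp [show k = 0 by exact_mod_cast this]
  obtain ⟨m, rfl⟩ : ∃ m : ℤ, x = m :=
    hx.exists_int_iff_exists_rat.mp ⟨k / n, by push_cast; field_simp; rw [← h, mul_comm]⟩
  exact ⟨m, by exact_mod_cast h.symm⟩

theorem not_isIntegral_inv_sin_pi_div_three : ¬ IsIntegral ℤ (sin (π / 3))⁻¹ := by
  intro h
  have : (3 : ℤ) ∣ 4 := dvd_of_isIntegral_of_intCast_mul_eq (h.pow 2) <| by
    rw [inv_pow, sin_pi_div_three, div_pow, sq_sqrt (by norm_num)]; norm_num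
  omega

theorem not_isIntegral_inv_sin_pi_div_five : ¬ IsIntegral ℤ (sin (π / 5))⁻¹ := by
  intro h
  have hσ : 16 * sin (π / 5) ^ 4 - 20 * sin (π / 5) ^ 2 + 5 = 0 := by
    have h5 : √5 ^ 2 = 5 := sq_sqrt (by norm_num)
    rw [show sin (π / 5) ^ 4 = (sin (π / 5) ^ 2) ^ 2 by ring, sin_sq, cos_pi_div_five]
    linear_combination (√5 ^ 2 + 4 * √5 - 1) / 16 * h5
  have hz := h.pow 2
  have : (5 : ℤ) ∣ -16 := dvd_of_isIntegral_of_intCast_mul_eq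
      ((hz.pow 2).sub (hz.zsmul 4)) <| by
    have hs : sin (π / 5) ≠ 0 :=
      (sin_pos_of_pos_of_lt_pi (by positivity) (by linarith [pi_pos])).ne'
    rw [zsmul_eq_mul]; push_cast; field_simp; linear_combination hσ
  omega

theorem not_isIntegral_inv_sin_pi_div_seven : ¬ IsIntegral ℤ (sin (π / 7))⁻¹ := by
  intro h
  have hs : sin (π / 7) ≠ 0 :=
    (sin_pos_of_pos_of_lt_pi (by positivity) (by linarith [pi_pos])).ne'
  have h43 : cos (4 * (2 * (π / 7))) = cos (3 * (2 * (π / 7))) := by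
    rw [← cos_two_pi_sub]; ring_nf
  rw [show 4 * (2 * (π / 7)) = 2 * (2 * (2 * (π / 7))) by ring, cos_two_mul, cos_two_mul,
    cos_three_mul, cos_two_mul, cos_sq'] at h43
  have hσ : 64 * sin (π / 7) ^ 6 - 112 * sin (π / 7) ^ 4 + 56 * sin (π / 7) ^ 2 - 7 = 0 := by
    apply mul_left_cancel₀ (pow_ne_zero 2 hs)
    linear_combination (1 / 2 : ℝ) * h43
  have hz := h.pow 2
  have : (7 : ℤ) ∣ 64 := dvd_of_isIntegral_of_intCast_mul_eq
      (((hz.pow 3).sub ((hz.pow 2).zsmul 8)).add (hz.zsmul 16)) <| by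
    simp only [zsmul_eq_mul]; push_cast; field_simp; linear_combination -hσ
  omega

theorem isIntegral_inv_sin_of_cos_two_mul_eq {p q : ℚ}
    (h : cos (2 * (p * π)) = 2 * sin (p * π) * sin (q * π)) :
    IsIntegral ℤ (sin (p * π))⁻¹ := by
  rw [cos_two_mul, cos_sq'] at h
  rw [inv_eq_of_mul_eq_one_right (b := 2 * sin (q * π) + 2 * sin (p * π))
    (by linear_combination -h)]
  exact (isIntegral_two_mul_sin_rat_mul_pi q).add (isIntegral_two_mul_sin_rat_mul_pi p)

theorem two_mul_sin_lt_cos_two_mul {u : ℝ} (hu₀ : 0 < u) (hu : u ≤ π / 9) :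
    2 * sin u < cos (2 * u) := by
  have hs₀ : 0 < sin u := sin_pos_of_pos_of_lt_pi hu₀ (by linarith [pi_pos])
  have hs : sin u < 7 / 20 := by linarith [sin_lt hu₀, pi_lt_d2]
  rw [cos_two_mul, cos_sq']
  nlinarith

theorem le_eight_of_cos_two_mul_eq {m : ℕ} {θ : ℝ}
    (h : cos (2 * (π / m)) = 2 * sin (π / m) * sin θ) : m ≤ 8 := by
  by_contra! hm
  have hu : π / m ≤ π / 9 :=
    div_le_div_of_nonneg_left pi_pos.le (by norm_num) (by exact_mod_cast (hm : 9 ≤ m))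
  have hs : 0 < sin (π / m) := sin_pos_of_pos_of_lt_pi (by positivity) (by linarith [pi_pos])
  nlinarith [two_mul_sin_lt_cos_two_mul (by positivity) hu, sin_le_one θ]

theorem eq_or_add_eq_pi_of_sin_eq_sin {x y : ℝ} (h₁ : |x - y| < 2 * π) (h₂ : 0 < x + y)
    (h₃ : x + y < 3 * π) (h : sin x = sin y) : x = y ∨ x + y = π := by
  rw [← sub_eq_zero, sin_sub_sin, mul_eq_zero, mul_eq_zero, ← sin_pi_div_two_sub] at h
  obtain ⟨h₁l, h₁r⟩ := abs_lt.mp h₁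
  rcases h with (h | h) | h
  · norm_num at h
  · left
    linarith [(sin_eq_zero_iff_of_lt_of_lt (by linarith) (by linarith)).mp h]
  · right
    linarith [(sin_eq_zero_iff_of_lt_of_lt (by linarith) (by linarith)).mp h]

theorem solutions_of_cos_two_mul_pi_div_eq {m : ℕ} (hm : 3 ≤ m) {γ : ℝ}
    (hγq : ∃ q : ℚ, γ = q * π) (hγ₀ : 0 < γ) (hγπ : γ < π)
    (h : cos (2 * (π / m)) = 2 * sin (π / m) * sin (γ + π / m)) :
    m = 4 ∧ γ = 3 * π / 4 ∨ m = 6 ∧ γ = 2 * π / 3 ∨ m = 8 ∧ (γ = π / 4 ∨ γ = π / 2) := by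
  have hπ := pi_pos
  have hm8 := le_eight_of_cos_two_mul_eq h
  obtain ⟨q, rfl⟩ := hγq
  have hint (p : ℚ) (hp : π / m = p * π) : IsIntegral ℤ (sin (π / m))⁻¹ := by
    rw [hp] at h ⊢
    exact isIntegral_inv_sin_of_cos_two_mul_eq (q := q + p) (by push_cast; rwa [add_mul])
  have hsin (y : ℝ) := eq_or_add_eq_pi_of_sin_eq_sin (x := q * π + π / m) (y := y)
  interval_cases m <;> push_cast at h hint hsin
  · exact (not_isIntegral_inv_sin_pi_div_three (hint (1 / 3) (by push_cast; ring))).elim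
  · have hs : sin (π / 4) ≠ 0 := (sin_pos_of_pos_of_lt_pi (by positivity) (by linarith)).ne'
    rw [show 2 * (π / 4) = π / 2 by ring, cos_pi_div_two, eq_comm, mul_eq_zero,
      or_iff_right (mul_ne_zero two_ne_zero hs), ← sin_zero] at h
    rcases hsin 0 (by rw [abs_lt]; constructor <;> linarith) (by linarith) (by linarith) h
      with h | h
    · linarith
    · exact .inl ⟨rfl, by linarith⟩
  · exact (not_isIntegral_inv_sin_pi_div_five (hint (1 / 5) (by push_cast; ring))).elim
  · rw [show 2 * (π / 6) = π / 3 by ring, cos_pi_div_three, sin_pi_div_six] at h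
    rcases hsin (π / 6) (by rw [abs_lt]; constructor <;> linarith) (by linarith) (by linarith)
      (by rw [sin_pi_div_six]; linarith) with h | h
    · linarith
    · exact .inr (.inl ⟨rfl, by linarith⟩)
  · exact (not_isIntegral_inv_sin_pi_div_seven (hint (1 / 7) (by push_cast; ring))).elim
  · have hs : 2 * sin (π / 8) ≠ 0 :=
      mul_ne_zero two_ne_zero (sin_pos_of_pos_of_lt_pi (by positivity) (by linarith)).ne'
    rw [show cos (2 * (π / 8)) = 2 * sin (π / 8) * sin (π / 2 - π / 8) by
      rw [sin_pi_div_two_sub, ← sin_two_mul, show 2 * (π / 8) = π / 4 by ring, cos_pi_div_four,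
        sin_pi_div_four]] at h
    rcases hsin (π / 2 - π / 8) (by rw [abs_lt]; constructor <;> linarith) (by linarith)
      (by linarith) (mul_left_cancel₀ hs h).symm with h | h
    · exact .inr (.inr ⟨rfl, .inl (by linarith)⟩)
    · exact .inr (.inr ⟨rfl, .inr (by linarith)⟩)

theorem eqE_iff_cos_two_mul_eq {γ u : ℝ} (hγ : sin (γ / 2) ≠ 0) :
    eqE (γ - π / 2 + 2 * u) (2 * π - 2 * γ) γ (π / 2) ↔
      cos (2 * u) = 2 * sin u * sin (γ + u) := by
  obtain ⟨a, rfl⟩ : ∃ a, γ = 2 * a := ⟨γ / 2, by ring⟩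
  have key : sin (a + 2 * u - π / 2) * sin (2 * a) - sin a * sin (2 * a - π / 2)
      = sin a * (2 * sin u * sin (2 * a + u) - cos (2 * u)) := by
    rw [sin_sub_pi_div_two, sin_sub_pi_div_two]
    simp only [sin_add, cos_add, sin_two_mul, cos_two_mul']
    linear_combination -sin a * (cos a ^ 2 - sin a ^ 2) * sin_sq_add_cos_sq u
      - sin a * (cos u ^ 2 - sin u ^ 2) * sin_sq_add_cos_sq a
  rw [mul_div_cancel_left₀ _ two_ne_zero] at hγ
  rw [eqE, ← sub_eq_zero, show 2 * a - π / 2 + 2 * u - 2 * a / 2 = a + 2 * u - π / 2 by ring,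
    show (2 * π - 2 * (2 * a)) / 2 = π - 2 * a by ring, sin_pi_sub,
    show π / 2 - (π - 2 * a) = 2 * a - π / 2 by ring, mul_div_cancel_left₀ _ two_ne_zero, key,
    mul_eq_zero, or_iff_right hγ, sub_eq_zero, eq_comm]

theorem stmt_10 (f : ℤ) (α β γ δ : ℝ) (hf : Even f) (hf6 : 6 ≤ f)
    (hgood : goodQuad f α β γ δ) (hE : eqE α β γ δ)
    (h1 : β + 2 * γ = 2 * π) (h2 : 4 * δ = 2 * π) :
    f = 16 ∧ α = π / 4 ∧ β = π ∧ γ = π / 2 ∧ δ = π / 2 := by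
  obtain ⟨-, -, -, -, hγq, -, ⟨hα₀, -⟩, ⟨hβ₀, -⟩, ⟨hγ₀, -⟩, -, hsum, -, hβγ, -, -, -, -, -, -, -,
    hβδ, -, -⟩ := hgood
  obtain ⟨m, rfl⟩ := hf
  lift m to ℕ using (by omega)
  have hm : (m : ℝ) ≠ 0 := by norm_cast; omega
  have hδ : δ = π / 2 := by linarith
  have hβ : β = 2 * π - 2 * γ := by linarith
  have hα : α = γ - π / 2 + 2 * (π / m) := by
    push_cast at hsum
    rw [show 4 * π / (m + m) = 2 * (π / m) by field_simp; ring] at hsum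
    linarith
  have hγπ : γ < π := by linarith
  have hγ₂ : sin (γ / 2) ≠ 0 := (sin_pos_of_pos_of_lt_pi (by linarith) (by linarith)).ne'
  rw [hα, hβ, hδ, eqE_iff_cos_two_mul_eq hγ₂] at hE
  rcases solutions_of_cos_two_mul_pi_div_eq (by omega) hγq hγ₀ hγπ hE with
    ⟨rfl, rfl⟩ | ⟨rfl, rfl⟩ | ⟨rfl, rfl | rfl⟩
  · exact absurd (hβδ.mp (by rw [hβ, hδ]; ring)) (by rw [hα]; push_cast; linarith)
  · exact absurd (by rw [hβ]; ring) hβγ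
  · rw [hα] at hα₀; push_cast at hα₀; linarith
  · refine ⟨rfl, by rw [hα]; push_cast; ring, by rw [hβ]; ring, rfl, hδ⟩
end

section
/- Let f be an even integer with f ≥ 6 and let (α, β, γ, δ) be a good rational quadruple for f satisfying equation (E), 2α + β = 2π, and 4β = 2π. Then f = 6 and (α, β, γ, δ) = (3π/4, π/2, π, 5π/12). -/
open Real

/-! With `β = π/2` and `α = 3π/4` forced, put `x = γ/2 - π/4` and `y = δ - π/4`. Equation (E)
becomes `cos x = (cos x + sin x) sin y` and the angle sum becomes `2x + y = 4π/f`. The equation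
forces `x ≥ 0`, and comparing `sin y` with `sin (2π/5 - 2x)` rules out `f ≥ 10`. For `f = 8` the
equation factors as `sin x (sin 2x - cos 2x) = 0`, giving `δ = π/2 = β`, impossible since `α ≠ π`.
For `f = 6` it factors as `(cos x - sin x) (2 cos (2x + π/3) + 1 - √3) = 0`; the second factor
vanishes only at a point with `α + δ > π + β`, so `x = π/4`, i.e. `γ = π`. -/

lemma cos_add_sin_eq_sqrt_two_mul_sin (x : ℝ) : cos x + sin x = √2 * sin (x + π / 4) := by
  rw [sin_add, sin_pi_div_four, cos_pi_div_four]
  linear_combination (-(sin x + cos x) / 2) * sq_sqrt (show (0:ℝ) ≤ 2 by norm_num)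

lemma sin_sub_cos_eq_sqrt_two_mul_sin (x : ℝ) : sin x - cos x = √2 * sin (x - π / 4) := by
  rw [sin_sub, sin_pi_div_four, cos_pi_div_four]
  linear_combination (-(sin x - cos x) / 2) * sq_sqrt (show (0:ℝ) ≤ 2 by norm_num)

lemma cos_add_sin_pos {x : ℝ} (h₁ : -(π / 4) < x) (h₂ : x < 3 * π / 4) : 0 < cos x + sin x := by
  rw [cos_add_sin_eq_sqrt_two_mul_sin]
  exact mul_pos (by positivity) (sin_pos_of_pos_of_lt_pi (by linarith) (by linarith))

lemma eq_pi_div_four_of_cos_eq_sin {x : ℝ} (h₁ : -(3 * π / 4) < x) (h₂ : x < 5 * π / 4)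
    (h : cos x = sin x) : x = π / 4 := by
  have hsin : sin (x - π / 4) = 0 := by
    have := sin_sub_cos_eq_sqrt_two_mul_sin x
    rw [h, sub_self, zero_eq_mul] at this
    exact this.resolve_left (by positivity)
  have := (sin_eq_zero_iff_of_lt_of_lt (by linarith) (by linarith)).1 hsin
  linarith

lemma eqE_iff_cos_eq_mul_sin (γ δ : ℝ) :
    eqE (3 * π / 4) (π / 2) γ δ ↔
      cos (γ / 2 - π / 4) = (cos (γ / 2 - π / 4) + sin (γ / 2 - π / 4)) * sin (δ - π / 4) := by
  have hu : γ / 2 = (γ / 2 - π / 4) + π / 4 := by ring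
  unfold eqE
  rw [show 3 * π / 4 - γ / 2 = π / 2 - (γ / 2 - π / 4) by ring, sin_pi_div_two_sub,
    show π / 2 / 2 = π / 4 by ring, hu, sin_add, sin_pi_div_four, cos_pi_div_four, ← hu]
  set c := cos (γ / 2 - π / 4)
  set s := sin (γ / 2 - π / 4)
  rw [show (s * (√2 / 2) + c * (√2 / 2)) * sin (δ - π / 4) = (c + s) * sin (δ - π / 4) * (√2 / 2)
    by ring]
  exact mul_left_inj' (by positivity)

lemma nonneg_of_cos_eq_mul_sin {x y : ℝ} (hK : cos x = (cos x + sin x) * sin y)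
    (hx : -(π / 4) < x) : 0 ≤ x := by
  by_contra! h
  have hpos := cos_add_sin_pos hx (by linarith)
  have hs : sin x < 0 := sin_neg_of_neg_of_neg_pi_lt h (by linarith)
  nlinarith [sin_le_one y]

lemma eq_pi_div_four_of_two_mul_add_eq_two_pi_div_three {x y : ℝ}
    (hK : cos x = (cos x + sin x) * sin y) (hxy : 2 * x + y = 2 * π / 3)
    (h₁ : π / 12 ≤ x) (h₂ : x ≤ 7 * π / 12) : x = π / 4 := by
  have hfactor : (cos x - sin x) * (2 * cos (2 * x + π / 3) + 1 - √3) = 0 := by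
    rw [show y = 2 * π / 3 - 2 * x by linarith, sin_sub] at hK
    rw [cos_add, sin_two_mul, cos_two_mul, cos_pi_div_three, sin_pi_div_three]
    have h23c : cos (2 * π / 3) = -(1 / 2) := by
      rw [show 2 * π / 3 = π - π / 3 by ring, cos_pi_sub, cos_pi_div_three]
    have h23s : sin (2 * π / 3) = √3 / 2 := by
      rw [show 2 * π / 3 = π - π / 3 by ring, sin_pi_sub, sin_pi_div_three]
    rw [h23c, h23s, sin_two_mul, cos_two_mul] at hK
    linear_combination 2 * hK + (2 + 2 * √3) * cos x * sin_sq_add_cos_sq x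
  have hneg : 2 * cos (2 * x + π / 3) + 1 - √3 < 0 := by
    have := cos_nonpos_of_pi_div_two_le_of_le (x := 2 * x + π / 3) (by linarith) (by linarith)
    have : 1 < √3 := by rw [lt_sqrt] <;> norm_num
    linarith
  exact eq_pi_div_four_of_cos_eq_sin (by linarith [pi_pos]) (by linarith [pi_pos])
    (sub_eq_zero.1 ((mul_eq_zero.1 hfactor).resolve_right hneg.ne))

lemma eq_pi_div_four_of_two_mul_add_eq_pi_div_two {x y : ℝ}
    (hK : cos x = (cos x + sin x) * sin y) (hxy : 2 * x + y = π / 2)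
    (h₁ : 0 < x) (h₂ : x < π / 2) : y = π / 4 := by
  have hy : y = π / 2 - 2 * x := by linarith
  have hfactor : sin x * (sin (2 * x) - cos (2 * x)) = 0 := by
    rw [hy, sin_pi_div_two_sub, cos_two_mul] at hK
    rw [sin_two_mul, cos_two_mul]
    linear_combination hK + 2 * cos x * sin_sq_add_cos_sq x
  have hsin : sin x ≠ 0 := (sin_pos_of_pos_of_lt_pi h₁ (by linarith)).ne'
  have := eq_pi_div_four_of_cos_eq_sin (x := 2 * x) (by linarith) (by linarith)
    (sub_eq_zero.1 ((mul_eq_zero.1 hfactor).resolve_left hsin)).symm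
  linarith

lemma cos_add_sin_mul_sin_lt_cos {x : ℝ} (h₀ : 0 ≤ x) (h₁ : x < π / 2) :
    (cos x + sin x) * sin (2 * π / 5 - 2 * x) < cos x := by
  have hC : cos (2 * π / 5) = sin (π / 10) := by
    rw [← cos_pi_div_two_sub]; congr 1; ring
  have hC₁ : sin (π / 10) ≤ 0.315 := by
    have := sin_le (by positivity : 0 ≤ π / 10); linarith [pi_lt_d2]
  have hC₀ : 0.3 ≤ sin (π / 10) := by
    have h := sin_gt_sub_cube (by positivity : 0 < π / 10)
    have hcube := pow_le_pow_left₀ (by positivity) (show π / 10 ≤ 0.315 by linarith [pi_lt_d2]) 3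
    linarith [pi_gt_d2]
  have hS₀ : 0 ≤ sin (2 * π / 5) :=
    sin_nonneg_of_nonneg_of_le_pi (by positivity) (by linarith [pi_pos])
  have hS : sin (2 * π / 5) ^ 2 + cos (2 * π / 5) ^ 2 = 1 := sin_sq_add_cos_sq _
  have hc : 0 < cos x := cos_pos_of_mem_Ioo ⟨by linarith, h₁⟩
  have hs : 0 ≤ sin x := sin_nonneg_of_nonneg_of_le_pi h₀ (by linarith)
  have hcs := sin_sq_add_cos_sq x
  rw [sin_sub, sin_two_mul, cos_two_mul]
  rw [hC] at hS ⊢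
  set S := sin (2 * π / 5)
  set C := sin (π / 10)
  set c := cos x
  set s := sin x
  have hS₁ : 0.94 ≤ S := by nlinarith
  have hS₂ : S ≤ 0.96 := by nlinarith
  have hq : 0 < (1 - S) * c ^ 2 - (S - 2 * C) * c * s + (1 + S + 2 * C) * s ^ 2 := by
    nlinarith [sq_nonneg (c - 4.5 * s), sq_nonneg s, mul_pos hc hc]
  have hP : c - (c + s) * (S * (2 * c ^ 2 - 1) - C * (2 * s * c))
      = c * ((1 - S) * c ^ 2 - (S - 2 * C) * c * s + (1 + S + 2 * C) * s ^ 2) + S * s ^ 3 := by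
    linear_combination (-(c + (c + s) * S)) * hcs
  nlinarith [mul_pos hc hq, mul_nonneg hS₀ (pow_nonneg hs 3)]

lemma two_pi_div_five_lt_of_cos_eq_mul_sin {x y : ℝ} (hK : cos x = (cos x + sin x) * sin y)
    (h₀ : 0 ≤ x) (h₁ : x < π / 2) (hy : -(π / 2) ≤ y) : 2 * π / 5 < 2 * x + y := by
  by_contra! h
  have hsin : sin y ≤ sin (2 * π / 5 - 2 * x) :=
    sin_le_sin_of_le_of_le_pi_div_two hy (by linarith) (by linarith)
  have hpos := cos_add_sin_pos (x := x) (by linarith) (by linarith)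
  have := mul_le_mul_of_nonneg_left hsin hpos.le
  linarith [cos_add_sin_mul_sin_lt_cos h₀ h₁]

theorem stmt_12 (f : ℤ) (α β γ δ : ℝ) (hf : Even f) (hf6 : 6 ≤ f)
    (hgood : goodQuad f α β γ δ) (hE : eqE α β γ δ)
    (h1 : 2 * α + β = 2 * π) (h2 : 4 * β = 2 * π) :
    f = 6 ∧ α = 3 * π / 4 ∧ β = π / 2 ∧ γ = π ∧ δ = 5 * π / 12 := by
  obtain ⟨-, -, -, -, -, -, -, -, ⟨hγ, -⟩, ⟨hδ, -⟩, hsum, -, hβγ, -, -, -, -, -, -, -, hβδ, -,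
    hlt_pi⟩ := hgood
  obtain rfl : β = π / 2 := by linarith
  obtain rfl : α = 3 * π / 4 := by linarith
  have hK := (eqE_iff_cos_eq_mul_sin γ δ).1 hE
  have hf' : (6 : ℝ) ≤ f := by exact_mod_cast hf6
  have hratio : 4 * π / f ≤ 4 * π / 6 :=
    div_le_div_of_nonneg_left (by positivity) (by norm_num) hf'
  have hx₀ : 0 < γ / 2 - π / 4 :=
    (nonneg_of_cos_eq_mul_sin hK (by linarith)).lt_of_ne fun h ↦ hβγ (by linarith)
  have hx₁ : γ / 2 - π / 4 < π / 2 := by linarith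
  obtain rfl | rfl : f = 6 ∨ f = 8 := by
    have : f < 10 := by
      by_contra! h
      have h' : (10 : ℝ) ≤ f := by exact_mod_cast h
      have : 4 * π / f ≤ 4 * π / 10 :=
        div_le_div_of_nonneg_left (by positivity) (by norm_num) h'
      have := two_pi_div_five_lt_of_cos_eq_mul_sin hK hx₀.le hx₁ (by linarith)
      linarith
    obtain ⟨k, rfl⟩ := hf
    omega
  · push_cast at hsum
    have hx : π / 12 ≤ γ / 2 - π / 4 := by
      by_contra! h
      have := (hlt_pi ⟨by linarith, by linarith, by linarith, by linarith⟩).2.1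
      linarith
    have := eq_pi_div_four_of_two_mul_add_eq_two_pi_div_three hK (by linarith) hx (by linarith)
    exact ⟨rfl, rfl, rfl, by linarith, by linarith⟩
  · push_cast at hsum
    have := eq_pi_div_four_of_two_mul_add_eq_pi_div_two hK (by linarith) hx₀ hx₁
    linarith [hβδ.1 (by linarith), pi_pos]
end

section
/- Let f be an even integer with f ≥ 6 and let (α, β, γ, δ) be a good rational quadruple for f satisfying equation (E), β + 2δ = 2π, and 2α + 2γ = 2π. Then f = 8 and (α, β, γ, δ) = (π/3, π, 2π/3, π/2). -/
/-!
With `t = 4π/f`, the two linear relations and the angle sum force `γ = π - α`, `β = 2t`,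
`δ = π - t`, and (E) collapses to `cos α + cos t = 1/2`.

For `f ≥ 20` the good-quadruple inequality `α + δ < π + γ` gives `α < 3π/5`, so
`cos α + cos t > cos (3π/5) + cos (π/5) = 1/2`. For `f = 6` the relation forces `cos α = 1`, and
for `f = 12` it gives `β = δ` while `α ≠ π`. The remaining cases `f = 10, 14, 16, 18` are ruled
out by Galois conjugation: `2 cos t` has a conjugate `2 cos t'` with `cos t' < -1/2`, which would
carry `2 cos α = 1 - 2 cos t` to a conjugate `1 - 2 cos t' > 2` of `2 cos α`. But `cos α` is a root
of `T_N - 1` for some `N ≥ 1`, and Chebyshev polynomials exceed `1` on `(1, ∞)`.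
-/

open Real

open Polynomial

theorem aeval_eq_zero_of_minpoly_eq {K A : Type*} [Field K] [CommRing A] [Algebra K A]
    {x y : A} (h : minpoly K x = minpoly K y) {P : K[X]} (hP : aeval x P = 0) :
    aeval y P = 0 :=
  aeval_eq_zero_of_dvd_aeval_eq_zero (h ▸ minpoly.dvd K x hP) (minpoly.aeval K y)

theorem exists_aeval_cos_rat_mul_pi_eq_zero (q : ℚ) :
    ∃ P : ℚ[X], aeval (cos (q * π)) P = 0 ∧ ∀ y : ℝ, 1 < y → aeval y P ≠ 0 := by
  have hN : ((2 * q.den : ℕ) : ℤ) ≠ 0 := by positivity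
  refine ⟨Chebyshev.T ℚ (2 * q.den : ℕ) - 1, ?_, fun y hy => ?_⟩
  · rw [map_sub, Chebyshev.aeval_T, Chebyshev.T_real_cos, map_one, sub_eq_zero]
    nth_rw 2 [← q.num_div_den]
    push_cast
    rw [show 2 * q.den * ((q.num : ℝ) / q.den * π) = q.num * (2 * π) by field_simp,
      cos_int_mul_two_pi]
  · rw [map_sub, Chebyshev.aeval_T, map_one, sub_ne_zero]
    exact (Chebyshev.one_lt_eval_T_real hN hy).ne'

theorem irreducible_map_of_monic_of_forall_eval_ne_zero {p : ℤ[X]} (hm : p.Monic)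
    (hdeg : p.natDegree = 2 ∨ p.natDegree = 3) (h : ∀ m : ℤ, p.eval m ≠ 0) :
    Irreducible (p.map (algebraMap ℤ ℚ)) := by
  rw [← hm.natDegree_map (algebraMap ℤ ℚ)] at hdeg
  rw [irreducible_iff_roots_eq_zero_of_degree_le_three (by omega) (by omega)]
  refine Multiset.eq_zero_of_forall_notMem fun r hr => ?_
  rw [mem_roots (hm.map _).ne_zero, IsRoot, eval_map_algebraMap] at hr
  obtain ⟨m, rfl⟩ := isInteger_of_is_root_of_monic hm hr
  rw [aeval_algebraMap_apply, map_eq_zero_iff _ (algebraMap ℤ ℚ).injective_int,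
    aeval_def, Algebra.algebraMap_self, eval₂_id] at hr
  exact h m hr

theorem cos_rat_mul_pi_add_ne_half (q : ℚ) {p : ℤ[X]}
    (hp : Irreducible (p.map (algebraMap ℤ ℚ))) {x y : ℝ} (hx : aeval (2 * x) p = 0)
    (hy : aeval (2 * y) p = 0) (hy1 : y < -(1 / 2)) :
    cos (q * π) + x ≠ 1 / 2 := by
  intro hq
  rw [← aeval_map_algebraMap ℚ] at hx hy
  have hxy : minpoly ℚ (2 * x) = minpoly ℚ (2 * y) :=
    (minpoly.eq_of_irreducible hp hx).symm.trans (minpoly.eq_of_irreducible hp hy)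
  obtain ⟨P, hP, hP1⟩ := exists_aeval_cos_rat_mul_pi_eq_zero q
  have hcomp : ∀ z : ℝ,
      aeval (2 * z) (P.comp (C (1 / 2) - C (1 / 2) * X)) = aeval (1 / 2 - z) P := by
    intro z
    rw [aeval_comp]
    congr 1
    simp
  refine hP1 (1 / 2 - y) (by linarith) ?_
  rw [← hcomp]
  refine aeval_eq_zero_of_minpoly_eq hxy ?_
  rw [hcomp, ← hq, add_sub_cancel_right, hP]

theorem cos_two_pi_div_three : cos (2 * π / 3) = -(1 / 2) := by
  rw [show 2 * π / 3 = π - π / 3 by ring, cos_pi_sub, cos_pi_div_three]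

theorem cos_lt_neg_half {x : ℝ} (h1 : 2 * π / 3 < x) (h2 : x ≤ π) : cos x < -(1 / 2) :=
  cos_two_pi_div_three ▸ cos_lt_cos_of_nonneg_of_le_pi (by positivity) h2 h1

theorem cos_two_pi_div_five : cos (2 * π / 5) = (√5 - 1) / 4 := by
  rw [show 2 * π / 5 = 2 * (π / 5) by ring, cos_two_mul, cos_pi_div_five]
  nlinarith [sq_sqrt (show (0 : ℝ) ≤ 5 by norm_num)]

theorem cos_three_pi_div_five_add_cos_pi_div_five : cos (3 * π / 5) + cos (π / 5) = 1 / 2 := by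
  rw [show 3 * π / 5 = π - 2 * π / 5 by ring, cos_pi_sub, cos_two_pi_div_five, cos_pi_div_five]
  ring

theorem half_lt_cos_add_cos {α t : ℝ} (hα0 : 0 ≤ α) (hα : α < 3 * π / 5) (ht0 : 0 ≤ t)
    (ht : t ≤ π / 5) : 1 / 2 < cos α + cos t := by
  have h1 : cos (3 * π / 5) < cos α :=
    cos_lt_cos_of_nonneg_of_le_pi hα0 (by linarith [pi_pos]) hα
  have h2 : cos (π / 5) ≤ cos t := cos_le_cos_of_nonneg_of_le_pi ht0 (by linarith [pi_pos]) ht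
  linarith [cos_three_pi_div_five_add_cos_pi_div_five]

theorem aeval_two_cos_of_cos_four_mul_eq_cos_three_mul {t : ℝ} (h : cos (4 * t) = cos (3 * t))
    (ht : cos t ≠ 1) : aeval (2 * cos t) (X ^ 3 + X ^ 2 - 2 * X - 1 : ℤ[X]) = 0 := by
  rw [show 4 * t = 2 * (2 * t) by ring, cos_two_mul, cos_two_mul, cos_three_mul] at h
  have : (cos t - 1) * ((2 * cos t) ^ 3 + (2 * cos t) ^ 2 - 2 * (2 * cos t) - 1) = 0 := by
    linear_combination h
  simpa [map_ofNat, sub_ne_zero.mpr ht] using this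

theorem aeval_two_cos_of_cos_three_mul_eq {t : ℝ} (h : cos (3 * t) = -(1 / 2)) :
    aeval (2 * cos t) (X ^ 3 - 3 * X + 1 : ℤ[X]) = 0 := by
  rw [cos_three_mul] at h
  simp only [map_add, map_sub, map_mul, map_pow, aeval_X, map_ofNat, map_one]
  linear_combination 2 * h

theorem cos_rat_mul_pi_add_cos_two_pi_div_five_ne_half (q : ℚ) :
    cos (q * π) + cos (2 * π / 5) ≠ 1 / 2 := by
  have hp : Irreducible ((X ^ 2 + X - 1 : ℤ[X]).map (algebraMap ℤ ℚ)) := by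
    refine irreducible_map_of_monic_of_forall_eval_ne_zero (by monicity!)
      (Or.inl (by compute_degree!)) fun m hm => ?_
    simp only [eval_sub, eval_add, eval_pow, eval_X, eval_one] at hm
    obtain ⟨h1, h2⟩ : -1 ≤ m ∧ m ≤ 0 := ⟨by nlinarith, by nlinarith⟩
    interval_cases m <;> simp at hm
  have h5 := sq_sqrt (show (0 : ℝ) ≤ 5 by norm_num)
  refine cos_rat_mul_pi_add_ne_half q hp (y := cos (4 * π / 5)) ?_ ?_
    (cos_lt_neg_half (by linarith [pi_pos]) (by linarith [pi_pos]))
  · simp only [map_sub, map_add, map_pow, aeval_X, map_one, cos_two_pi_div_five]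
    linear_combination h5 / 4
  · simp only [map_sub, map_add, map_pow, aeval_X, map_one]
    rw [show 4 * π / 5 = π - π / 5 by ring, cos_pi_sub, cos_pi_div_five]
    linear_combination h5 / 4

theorem cos_rat_mul_pi_add_cos_two_pi_div_seven_ne_half (q : ℚ) :
    cos (q * π) + cos (2 * π / 7) ≠ 1 / 2 := by
  have hp : Irreducible ((X ^ 3 + X ^ 2 - 2 * X - 1 : ℤ[X]).map (algebraMap ℤ ℚ)) := by
    refine irreducible_map_of_monic_of_forall_eval_ne_zero (by monicity!)
      (Or.inr (by compute_degree!)) fun m hm => ?_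
    simp only [eval_sub, eval_add, eval_mul, eval_pow, eval_X, eval_one, eval_ofNat] at hm
    obtain ⟨h1, h2⟩ : -1 ≤ m ∧ m ≤ 1 :=
      ⟨by nlinarith [sq_nonneg (m + 1)], by nlinarith [sq_nonneg (m - 1)]⟩
    interval_cases m <;> simp at hm
  have hne : ∀ t, 0 < t → t < 2 * π → cos t ≠ 1 := fun t h0 h1 h =>
    h0.ne' ((cos_eq_one_iff_of_lt_of_lt (by linarith) h1).mp h)
  refine cos_rat_mul_pi_add_ne_half q hp (y := cos (6 * π / 7))
    (aeval_two_cos_of_cos_four_mul_eq_cos_three_mul ?_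
      (hne _ (by positivity) (by linarith [pi_pos])))
    (aeval_two_cos_of_cos_four_mul_eq_cos_three_mul ?_
      (hne _ (by positivity) (by linarith [pi_pos])))
    (cos_lt_neg_half (by linarith [pi_pos]) (by linarith [pi_pos]))
  · rw [show 4 * (2 * π / 7) = -(3 * (2 * π / 7)) + 2 * π by ring, cos_add_two_pi, cos_neg]
  · rw [show 4 * (6 * π / 7) = -(3 * (6 * π / 7)) + (3 : ℕ) * (2 * π) by push_cast; ring,
      cos_add_nat_mul_two_pi, cos_neg]

theorem cos_rat_mul_pi_add_cos_pi_div_four_ne_half (q : ℚ) :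
    cos (q * π) + cos (π / 4) ≠ 1 / 2 := by
  have hp : Irreducible ((X ^ 2 - 2 : ℤ[X]).map (algebraMap ℤ ℚ)) := by
    refine irreducible_map_of_monic_of_forall_eval_ne_zero (by monicity!)
      (Or.inl (by compute_degree!)) fun m hm => ?_
    simp only [eval_sub, eval_pow, eval_X, eval_ofNat] at hm
    obtain ⟨h1, h2⟩ : -1 ≤ m ∧ m ≤ 1 := ⟨by nlinarith, by nlinarith⟩
    interval_cases m <;> simp at hm
  have h2 := sq_sqrt (show (0 : ℝ) ≤ 2 by norm_num)
  refine cos_rat_mul_pi_add_ne_half q hp (y := cos (3 * π / 4)) ?_ ?_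
    (cos_lt_neg_half (by linarith [pi_pos]) (by linarith [pi_pos]))
  · simp only [map_sub, map_pow, aeval_X, map_ofNat, cos_pi_div_four]
    linear_combination h2
  · simp only [map_sub, map_pow, aeval_X, map_ofNat]
    rw [show 3 * π / 4 = π - π / 4 by ring, cos_pi_sub, cos_pi_div_four]
    linear_combination h2

theorem cos_rat_mul_pi_add_cos_two_pi_div_nine_ne_half (q : ℚ) :
    cos (q * π) + cos (2 * π / 9) ≠ 1 / 2 := by
  have hp : Irreducible ((X ^ 3 - 3 * X + 1 : ℤ[X]).map (algebraMap ℤ ℚ)) := by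
    refine irreducible_map_of_monic_of_forall_eval_ne_zero (by monicity!)
      (Or.inr (by compute_degree!)) fun m hm => ?_
    simp only [eval_sub, eval_add, eval_mul, eval_pow, eval_X, eval_one, eval_ofNat] at hm
    obtain ⟨h1, h2⟩ : -1 ≤ m ∧ m ≤ 1 :=
      ⟨by nlinarith [sq_nonneg (m + 1)], by nlinarith [sq_nonneg (m - 1)]⟩
    interval_cases m <;> simp at hm
  refine cos_rat_mul_pi_add_ne_half q hp (y := cos (8 * π / 9))
    (aeval_two_cos_of_cos_three_mul_eq ?_) (aeval_two_cos_of_cos_three_mul_eq ?_)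
    (cos_lt_neg_half (by linarith [pi_pos]) (by linarith [pi_pos]))
  · rw [show 3 * (2 * π / 9) = 2 * π / 3 by ring, cos_two_pi_div_three]
  · rw [show 3 * (8 * π / 9) = 2 * π / 3 + 2 * π by ring, cos_add_two_pi, cos_two_pi_div_three]

theorem cos_add_cos_eq_half_of_eqE {α t : ℝ} (hα0 : 0 < α) (hα : α < π) (ht0 : 0 < t)
    (ht : t < π) (hE : eqE α (2 * t) (π - α) (π - t)) : cos α + cos t = 1 / 2 := by
  have hsin : 0 < sin t := sin_pos_of_pos_of_lt_pi ht0 ht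
  have hcos : 0 < cos (α / 2) := cos_pos_of_mem_Ioo ⟨by linarith, by linarith⟩
  rw [eqE, show α - (π - α) / 2 = 3 * (α / 2) - π / 2 by ring, show 2 * t / 2 = t by ring,
    show (π - α) / 2 = π / 2 - α / 2 by ring, show π - t - t = π - 2 * t by ring,
    sin_sub_pi_div_two, sin_pi_div_two_sub, sin_pi_sub, sin_two_mul, cos_three_mul] at hE
  have hα2 : cos α = 2 * cos (α / 2) ^ 2 - 1 := by
    rw [← cos_two_mul, mul_div_cancel₀ α two_ne_zero]
  have : cos (α / 2) * sin t * (2 * (cos α + cos t) - 1) = 0 := by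
    rw [hα2]; linear_combination -hE
  have := (mul_eq_zero.mp this).resolve_left (by positivity)
  linarith

theorem eq_eight_of_cos_add_cos_four_pi_div_eq_half {f : ℤ} (hf : Even f) (hf6 : 6 ≤ f)
    (hf12 : f ≠ 12) {α : ℝ} (hαq : ∃ q : ℚ, α = q * π) (hα0 : 0 < α) (hα : α < π)
    (hα20 : 20 ≤ f → α < 3 * π / 5) (hcos : cos α + cos (4 * π / f) = 1 / 2) : f = 8 := by
  obtain ⟨q, rfl⟩ := hαq
  rcases le_or_gt 20 f with h20 | h20
  · have ht : 4 * π / f ≤ 4 * π / 20 :=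
      div_le_div_of_nonneg_left (by positivity) (by norm_num) (by exact_mod_cast h20)
    exact absurd hcos
      (half_lt_cos_add_cos hα0.le (hα20 h20) (by positivity) (by linarith)).ne'
  obtain ⟨k, rfl⟩ := hf
  obtain rfl | rfl | rfl | rfl | rfl | rfl :
      k = 3 ∨ k = 4 ∨ k = 5 ∨ k = 7 ∨ k = 8 ∨ k = 9 := by omega
  · rw [show 4 * π / ((3 + 3 : ℤ) : ℝ) = 2 * π / 3 by push_cast; ring,
      cos_two_pi_div_three] at hcos
    have := (cos_eq_one_iff_of_lt_of_lt (x := q * π) (by linarith [pi_pos]) (by linarith)).mp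
      (by linarith)
    linarith
  · rfl
  · rw [show 4 * π / ((5 + 5 : ℤ) : ℝ) = 2 * π / 5 by push_cast; ring] at hcos
    exact absurd hcos (cos_rat_mul_pi_add_cos_two_pi_div_five_ne_half q)
  · rw [show 4 * π / ((7 + 7 : ℤ) : ℝ) = 2 * π / 7 by push_cast; ring] at hcos
    exact absurd hcos (cos_rat_mul_pi_add_cos_two_pi_div_seven_ne_half q)
  · rw [show 4 * π / ((8 + 8 : ℤ) : ℝ) = π / 4 by push_cast; ring] at hcos
    exact absurd hcos (cos_rat_mul_pi_add_cos_pi_div_four_ne_half q)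
  · rw [show 4 * π / ((9 + 9 : ℤ) : ℝ) = 2 * π / 9 by push_cast; ring] at hcos
    exact absurd hcos (cos_rat_mul_pi_add_cos_two_pi_div_nine_ne_half q)

theorem stmt_13 (f : ℤ) (α β γ δ : ℝ) (hf : Even f) (hf6 : 6 ≤ f)
    (hgood : goodQuad f α β γ δ) (hE : eqE α β γ δ)
    (h1 : β + 2 * δ = 2 * π) (h2 : 2 * α + 2 * γ = 2 * π) :
    f = 8 ∧ α = π / 3 ∧ β = π ∧ γ = 2 * π / 3 ∧ δ = π / 2 := by
  obtain ⟨-, -, hαq, -, -, -, ⟨hα0, -⟩, -, ⟨hγ0, -⟩, -, hsum, -, -, -, -, -, -, -, -, -, hβδ,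
    -, hsmall⟩ := hgood
  have hf0 : (0 : ℝ) < f := by exact_mod_cast (show (0 : ℤ) < f by omega)
  set t := 4 * π / f with ht
  have ht0 : 0 < t := by positivity
  have ht6 : t ≤ 4 * π / 6 :=
    div_le_div_of_nonneg_left (by positivity) (by norm_num) (by exact_mod_cast hf6)
  obtain rfl : γ = π - α := by linarith
  obtain rfl : β = 2 * t := by linarith
  obtain rfl : δ = π - t := by linarith
  have hα : α < π := by linarith
  have hcos := cos_add_cos_eq_half_of_eqE hα0 hα ht0 (by linarith [pi_pos]) hE
  obtain rfl : f = 8 := by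
    refine eq_eight_of_cos_add_cos_four_pi_div_eq_half hf hf6 (fun h12 => hα.ne (hβδ.mp ?_)) hαq
      hα0 hα (fun h20 => ?_) hcos
    · rw [ht, h12]; push_cast; ring
    · have ht20 : t ≤ 4 * π / 20 :=
        div_le_div_of_nonneg_left (by positivity) (by norm_num) (by exact_mod_cast h20)
      linarith [(hsmall ⟨hα, by linarith, by linarith, by linarith⟩).2.2.1]
  have ht8 : t = π / 2 := by rw [ht]; push_cast; ring
  rw [ht8, cos_pi_div_two, add_zero, ← cos_pi_div_three] at hcos
  have hα3 := injOn_cos ⟨hα0.le, hα.le⟩ ⟨by positivity, by linarith [pi_pos]⟩ hcos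
  exact ⟨rfl, hα3, by linarith, by linarith, by linarith⟩
end

section
/- There is no even integer f ≥ 6 and good rational quadruple (α, β, γ, δ) for f satisfying equation (E) together with 2α + β = 2π and 3β = 2π. -/
/-!
The two linear conditions force `α = β = 2π/3`. Writing `t = 2π/f ≤ π/3` and
`γ = 2π/3 + 2u`, the angle sum gives `δ = 2t - 2u`, so `-π/3 < u < t`, and `u ≠ 0` because
`β ≠ γ`. Equation (E) becomes `sin (π/3 - u) sin (π/3) = sin (u + π/3) sin (2t - 2u - π/3)`,
and the left side is strictly larger: when `cos (2u - t) ≥ 0` the difference is a sum of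
nonnegative terms one of which is `2 sin² u cos u > 0`; otherwise `u < -π/12`, so the right
side is below `sin (π/4) < 3/4` while the left side exceeds `sin² (π/3) = 3/4`.
-/

open Real

lemma sin_pi_div_three_sub_mul_sub_sin_add_mul_eq (u t : ℝ) :
    sin (π / 3 - u) * sin (π / 3) - sin (u + π / 3) * sin (2 * t - 2 * u - π / 3) =
      2 * sin u ^ 2 * cos u + 2 * sin (u + π / 3) * cos (2 * u - t) * sin (π / 3 - t) := by
  have h3 : √3 ^ 2 = 3 := sq_sqrt (by norm_num)
  have hu : sin u ^ 2 + cos u ^ 2 = 1 := sin_sq_add_cos_sq u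
  have ht : sin t ^ 2 + cos t ^ 2 = 1 := sin_sq_add_cos_sq t
  simp only [sin_sub, sin_add, cos_sub, sin_two_mul, cos_two_mul, sin_pi_div_three,
    cos_pi_div_three]
  linear_combination (cos u - cos u ^ 3) / 2 * h3
    + (-5 * cos u + 2 * cos u * cos t ^ 2 + 2 * cos u * sin t ^ 2) / 2 * hu
    + (cos u - cos u ^ 3 + √3 * sin u * cos u ^ 2) * ht

variable {u t : ℝ}

lemma sin_pi_div_three_lt_sin_pi_div_three_sub (hu : -(π / 3) < u) (hu0 : u < 0) :
    sin (π / 3) < sin (π / 3 - u) := by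
  rw [← cos_pi_div_two_sub, ← cos_pi_div_two_sub, ← cos_abs (π / 2 - (π / 3 - u))]
  exact cos_lt_cos_of_nonneg_of_le_pi (abs_nonneg _) (by linarith [pi_pos])
    (abs_lt.mpr ⟨by linarith, by linarith⟩)

lemma sin_add_pi_div_three_mul_sin_lt_of_le_two_mul_sub (hu : -(π / 3) < u) (hut : u < t)
    (ht : t ≤ π / 3) (hu0 : u ≠ 0) (hcos : -(π / 2) ≤ 2 * u - t) :
    sin (u + π / 3) * sin (2 * t - 2 * u - π / 3) < sin (π / 3 - u) * sin (π / 3) := by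
  have hsin_u : sin u ≠ 0 := fun h =>
    hu0 ((sin_eq_zero_iff_of_lt_of_lt (by linarith [pi_pos]) (by linarith)).mp h)
  have hcos_u : 0 < cos u := cos_pos_of_mem_Ioo ⟨by linarith [pi_pos], by linarith⟩
  have hrest : 0 ≤ sin (u + π / 3) * cos (2 * u - t) * sin (π / 3 - t) :=
    mul_nonneg (mul_nonneg (sin_nonneg_of_nonneg_of_le_pi (by linarith) (by linarith))
      (cos_nonneg_of_mem_Icc ⟨hcos, by linarith⟩))
      (sin_nonneg_of_nonneg_of_le_pi (by linarith) (by linarith))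
  have := sin_pi_div_three_sub_mul_sub_sin_add_mul_eq u t
  nlinarith [mul_pos (sq_pos_of_ne_zero hsin_u) hcos_u]

lemma sin_add_pi_div_three_mul_sin_lt_of_two_mul_sub_lt (hu : -(π / 3) < u) (ht : t ≤ π / 3)
    (hcos : 2 * u - t < -(π / 2)) :
    sin (u + π / 3) * sin (2 * t - 2 * u - π / 3) < sin (π / 3 - u) * sin (π / 3) := by
  have hu12 : u < -(π / 12) := by linarith
  have h_pi4 : sin (u + π / 3) < sin (π / 4) :=
    sin_lt_sin_of_lt_of_le_pi_div_two (by linarith) (by linarith [pi_pos]) (by linarith)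
  have h_sqrt2 : √2 < 3 / 2 := (sqrt_lt' (by norm_num)).mpr (by norm_num)
  have h_sqrt3 : √3 ^ 2 = 3 := sq_sqrt (by norm_num)
  calc sin (u + π / 3) * sin (2 * t - 2 * u - π / 3)
      ≤ sin (u + π / 3) :=
        mul_le_of_le_one_right (sin_nonneg_of_nonneg_of_le_pi (by linarith) (by linarith))
          (sin_le_one _)
    _ < sin (π / 3) * sin (π / 3) := by
        rw [sin_pi_div_four] at h_pi4; rw [sin_pi_div_three]; nlinarith
    _ < sin (π / 3 - u) * sin (π / 3) :=
        mul_lt_mul_of_pos_right (sin_pi_div_three_lt_sin_pi_div_three_sub hu (by linarith [pi_pos]))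
          (by rw [sin_pi_div_three]; positivity)

lemma sin_add_pi_div_three_mul_sin_lt (hu : -(π / 3) < u) (hut : u < t) (ht : t ≤ π / 3)
    (hu0 : u ≠ 0) :
    sin (u + π / 3) * sin (2 * t - 2 * u - π / 3) < sin (π / 3 - u) * sin (π / 3) :=
  (le_or_gt (-(π / 2)) (2 * u - t)).elim
    (sin_add_pi_div_three_mul_sin_lt_of_le_two_mul_sub hu hut ht hu0)
    (sin_add_pi_div_three_mul_sin_lt_of_two_mul_sub_lt hu ht)

theorem stmt_15 :
    ¬ ∃ (f : ℤ) (α β γ δ : ℝ), Even f ∧ 6 ≤ f ∧ goodQuad f α β γ δ ∧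
      eqE α β γ δ ∧ 2 * α + β = 2 * π ∧ 3 * β = 2 * π := by
  rintro ⟨f, α, β, γ, δ, -, hf6, hgood, hE, hαβ, hβ⟩
  obtain ⟨-, -, -, -, -, -, -, -, ⟨hγ, -⟩, ⟨hδ, -⟩, hsum, -, hβγ, -⟩ := hgood
  have hf : (6 : ℝ) ≤ f := by exact_mod_cast hf6
  have ht : 2 * π / f ≤ π / 3 := by
    rw [div_le_iff₀ (by linarith)]; nlinarith [pi_pos]
  have hδ_eq : δ = 2 * π / 3 + 2 * (2 * π / f) - γ := by
    rw [show 4 * π / (f : ℝ) = 2 * (2 * π / f) by ring] at hsum; linarith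
  have hlt := sin_add_pi_div_three_mul_sin_lt (u := γ / 2 - π / 3) (t := 2 * π / f)
    (by linarith) (by linarith) ht (fun h => hβγ (by linarith))
  refine hlt.ne' ?_
  unfold eqE at hE
  convert hE using 3 <;> linarith
end

section
/- No root of unity is a root of the polynomial 25y⁸ + 998y⁶ + 1923y⁴ + 998y² + 25, and no root of unity is a root of the polynomial 11y⁸ + 6y⁷ − 1217y⁶ − 4182y⁵ − 5112y⁴ − 4182y³ − 1217y² + 6y + 11. -/
/-!
Both polynomials are palindromic: the first is `y⁴ tracePoly₁(y² + y⁻²)` and the second is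
`y⁴ tracePoly₂(y + y⁻¹)`. For a root of unity `y`, both `y + y⁻¹` and `y² + y⁻²` are algebraic
integers. The minimal polynomial of an algebraic integer root of `R ∈ ℤ[X]` is monic and divides
`R`; if `R` stays irreducible modulo a prime not dividing its leading coefficient, the cofactor
is the constant `R.leadingCoeff`, which therefore divides every coefficient of `R`. But
`tracePoly₁` is irreducible mod 11 and `25 ∤ 998`, and `tracePoly₂` is irreducible mod 17 and
`11 ∤ 6`.
-/

open Polynomial

theorem isIntegral_add_inv_of_pow_eq_one {K : Type*} [Field K] {y : K} {n : ℕ} (hn : n ≠ 0)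
    (hy : y ^ n = 1) : IsIntegral ℤ (y + y⁻¹) := by
  have hint : IsIntegral ℤ y := ⟨X ^ n - 1, monic_X_pow_sub_C 1 hn, by simp [hy]⟩
  rw [inv_eq_of_mul_eq_one_right ((mul_pow_sub_one hn y).trans hy)]
  exact hint.add (hint.pow _)

theorem eq_C_leadingCoeff_mul_minpoly_of_irreducible_map {A S B : Type*} [CommRing A]
    [IsDomain A] [IsIntegrallyClosed A] [CommRing S] [IsDomain S] [Algebra A S]
    [Module.IsTorsionFree A S] [CommRing B] [IsDomain B] (φ : A →+* B) {R : A[X]} {x : S}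
    (hx : IsIntegral A x) (hR : aeval x R = 0) (hlc : φ R.leadingCoeff ≠ 0)
    (hirr : Irreducible (R.map φ)) : R = C R.leadingCoeff * minpoly A x := by
  obtain ⟨Q, hQ⟩ := minpoly.isIntegrallyClosed_dvd hx hR
  have hM := minpoly.monic hx
  have hlcQ : Q.leadingCoeff = R.leadingCoeff := by rw [hQ, leadingCoeff_monic_mul hM]
  have hMφ : ¬ IsUnit ((minpoly A x).map φ) := fun h => by
    have := natDegree_eq_zero_of_isUnit h
    rw [hM.natDegree_map] at this
    exact (minpoly.natDegree_pos hx).ne' this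
  have hQφ : IsUnit (Q.map φ) :=
    (hirr.isUnit_or_isUnit (by rw [hQ, Polynomial.map_mul])).resolve_left hMφ
  have hQdeg : Q.natDegree = 0 := by
    rw [← natDegree_map_of_leadingCoeff_ne_zero φ (hlcQ ▸ hlc)]
    exact natDegree_eq_zero_of_isUnit hQφ
  obtain ⟨c, rfl⟩ := natDegree_eq_zero.mp hQdeg
  rw [leadingCoeff_C] at hlcQ
  rw [← hlcQ, hQ, mul_comm]

theorem irreducible_of_degree_le_four_of_not_isRoot_of_not_dvd {K : Type*} [Field K]
    {f : K[X]} (hdeg : f.natDegree ∈ Finset.Icc 1 4) (hroot : ∀ a, ¬ f.IsRoot a)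
    (hquad : ∀ a b, ¬ X ^ 2 + C a * X + C b ∣ f) : Irreducible f := by
  rw [Finset.mem_Icc] at hdeg
  have hf0 : f ≠ 0 := by rintro rfl; simp at hdeg
  have hfu : ¬ IsUnit f := fun h => by simp [natDegree_eq_zero_of_isUnit h] at hdeg
  rw [irreducible_iff_lt_natDegree_lt hf0 hfu]
  intro q hq hqdeg hdvd
  rw [Finset.mem_Ioc] at hqdeg
  obtain h1 | h2 : q.natDegree = 1 ∨ q.natDegree = 2 := by omega
  · rw [hq.eq_X_add_C h1, ← sub_neg_eq_add, ← C_neg, dvd_iff_isRoot] at hdvd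
    exact hroot _ hdvd
  · rw [hq.as_sum, h2, Finset.sum_range_succ, Finset.sum_range_one] at hdvd
    exact hquad (q.coeff 1) (q.coeff 0) (by convert hdvd using 1; ring)

instance fact_prime_eleven : Fact (Nat.Prime 11) := ⟨by norm_num⟩

instance fact_prime_seventeen : Fact (Nat.Prime 17) := ⟨by norm_num⟩

noncomputable def tracePoly₁ : ℤ[X] := C 25 * X ^ 2 + C 998 * X + C 1873

noncomputable def tracePoly₂ : ℤ[X] :=
  C 11 * X ^ 4 + C 6 * X ^ 3 - C 1261 * X ^ 2 - C 4200 * X - C 2656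

theorem map_tracePoly₁ {R : Type*} [Ring R] (f : ℤ →+* R) :
    tracePoly₁.map f = 25 * X ^ 2 + 998 * X + 1873 := by
  simp [tracePoly₁]

theorem map_tracePoly₂ {R : Type*} [Ring R] (f : ℤ →+* R) :
    tracePoly₂.map f = 11 * X ^ 4 + 6 * X ^ 3 - 1261 * X ^ 2 - 4200 * X - 2656 := by
  simp [tracePoly₂]

theorem eq_pow_mul_aeval_tracePoly₁ {K : Type*} [Field K] {y : K} (hy : y ≠ 0) :
    25 * y ^ 8 + 998 * y ^ 6 + 1923 * y ^ 4 + 998 * y ^ 2 + 25 =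
      y ^ 4 * aeval (y ^ 2 + (y ^ 2)⁻¹) tracePoly₁ := by
  rw [← eval_map_algebraMap, map_tracePoly₁]
  simp only [eval_add, eval_mul, eval_pow, eval_X, eval_ofNat]
  field_simp
  ring

theorem eq_pow_mul_aeval_tracePoly₂ {K : Type*} [Field K] {y : K} (hy : y ≠ 0) :
    11 * y ^ 8 + 6 * y ^ 7 - 1217 * y ^ 6 - 4182 * y ^ 5 - 5112 * y ^ 4 -
        4182 * y ^ 3 - 1217 * y ^ 2 + 6 * y + 11 =
      y ^ 4 * aeval (y + y⁻¹) tracePoly₂ := by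
  rw [← eval_map_algebraMap, map_tracePoly₂]
  simp only [eval_sub, eval_add, eval_mul, eval_pow, eval_X, eval_ofNat]
  field_simp
  ring

theorem leadingCoeff_tracePoly₁ : tracePoly₁.leadingCoeff = 25 := by
  rw [tracePoly₁, leadingCoeff, show natDegree _ = 2 by compute_degree!]
  simp [coeff_X]

theorem leadingCoeff_tracePoly₂ : tracePoly₂.leadingCoeff = 11 := by
  rw [tracePoly₂, leadingCoeff, show natDegree _ = 4 by compute_degree!]
  simp [coeff_X]

theorem irreducible_map_tracePoly₁ :
    Irreducible (tracePoly₁.map (Int.castRingHom (ZMod 11))) := by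
  refine irreducible_of_degree_le_three_of_not_isRoot ?_ ?_ <;> rw [map_tracePoly₁]
  · rw [show natDegree _ = 2 by compute_degree!]
    decide
  · simp only [IsRoot, eval_add, eval_mul, eval_pow, eval_X, eval_ofNat]
    decide

theorem C_mul_X_add_C_eq_zero_iff {R : Type*} [Semiring R] {a b : R} :
    C a * X + C b = 0 ↔ a = 0 ∧ b = 0 := by
  refine ⟨fun h => ⟨?_, ?_⟩, fun ⟨ha, hb⟩ => by simp [ha, hb]⟩
  · simpa using congrArg (coeff · 1) h
  · simpa using congrArg (coeff · 0) h

theorem not_dvd_map_tracePoly₂ (a b : ZMod 17) :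
    ¬ X ^ 2 + C a * X + C b ∣ tracePoly₂.map (Int.castRingHom (ZMod 17)) := by
  have hrem_ne : ∀ a b : ZMod 17,
      ¬ (-4200 - a * (-1261 - 11 * b - a * (6 - 11 * a)) - b * (6 - 11 * a) = 0 ∧
        -2656 - b * (-1261 - 11 * b - a * (6 - 11 * a)) = 0) := by
    decide
  intro hdvd
  set q₁ := 6 - 11 * a
  set q₀ := -1261 - 11 * b - a * q₁
  have hrem : tracePoly₂.map (Int.castRingHom (ZMod 17)) -
      (X ^ 2 + C a * X + C b) * (11 * X ^ 2 + C q₁ * X + C q₀) =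
      C (-4200 - a * q₀ - b * q₁) * X + C (-2656 - b * q₀) := by
    simp only [map_tracePoly₂, q₀, q₁, map_sub, map_mul, map_neg, map_ofNat]
    ring
  have hlin : C (-4200 - a * q₀ - b * q₁) * X + C (-2656 - b * q₀) = 0 := by
    rw [← hrem]
    refine eq_zero_of_dvd_of_degree_lt (dvd_sub hdvd (dvd_mul_right _ _)) ?_
    rw [hrem, show degree (X ^ 2 + C a * X + C b) = 2 by compute_degree!]
    exact degree_linear_le.trans_lt (by decide)
  exact hrem_ne a b (C_mul_X_add_C_eq_zero_iff.mp hlin)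

theorem irreducible_map_tracePoly₂ :
    Irreducible (tracePoly₂.map (Int.castRingHom (ZMod 17))) := by
  refine irreducible_of_degree_le_four_of_not_isRoot_of_not_dvd ?_ ?_ not_dvd_map_tracePoly₂ <;>
    rw [map_tracePoly₂]
  · rw [show natDegree _ = 4 by compute_degree!]
    decide
  · simp only [IsRoot, eval_sub, eval_add, eval_mul, eval_pow, eval_X, eval_ofNat]
    decide

theorem aeval_tracePoly₁_ne_zero {S : Type*} [CommRing S] [IsDomain S] [CharZero S] {x : S}
    (hx : IsIntegral ℤ x) : aeval x tracePoly₁ ≠ 0 := by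
  intro h
  have hR := eq_C_leadingCoeff_mul_minpoly_of_irreducible_map (Int.castRingHom (ZMod 11)) hx h
    (by rw [leadingCoeff_tracePoly₁]; decide) irreducible_map_tracePoly₁
  have h₁ : (998 : ℤ) = 25 * (minpoly ℤ x).coeff 1 := by
    rw [← leadingCoeff_tracePoly₁, ← coeff_C_mul, ← hR]
    simp [tracePoly₁, coeff_X]
  omega

theorem aeval_tracePoly₂_ne_zero {S : Type*} [CommRing S] [IsDomain S] [CharZero S] {x : S}
    (hx : IsIntegral ℤ x) : aeval x tracePoly₂ ≠ 0 := by
  intro h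
  have hR := eq_C_leadingCoeff_mul_minpoly_of_irreducible_map (Int.castRingHom (ZMod 17)) hx h
    (by rw [leadingCoeff_tracePoly₂]; decide) irreducible_map_tracePoly₂
  have h₃ : (6 : ℤ) = 11 * (minpoly ℤ x).coeff 3 := by
    rw [← leadingCoeff_tracePoly₂, ← coeff_C_mul, ← hR]
    simp [tracePoly₂, coeff_X]
  omega

theorem stmt_18 :
    (∀ y : ℂ, (∃ n : ℕ, 0 < n ∧ y ^ n = 1) →
      25 * y ^ 8 + 998 * y ^ 6 + 1923 * y ^ 4 + 998 * y ^ 2 + 25 ≠ 0) ∧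
    (∀ y : ℂ, (∃ n : ℕ, 0 < n ∧ y ^ n = 1) →
      11 * y ^ 8 + 6 * y ^ 7 - 1217 * y ^ 6 - 4182 * y ^ 5 - 5112 * y ^ 4 -
        4182 * y ^ 3 - 1217 * y ^ 2 + 6 * y + 11 ≠ 0) := by
  constructor <;> rintro y ⟨n, hn, hy⟩
  all_goals have hy0 : y ≠ 0 := by rintro rfl; simp [hn.ne'] at hy
  · have hy2 : (y ^ 2) ^ n = 1 := by rw [pow_right_comm, hy, one_pow]
    rw [eq_pow_mul_aeval_tracePoly₁ hy0]
    exact mul_ne_zero (pow_ne_zero 4 hy0)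
      (aeval_tracePoly₁_ne_zero (isIntegral_add_inv_of_pow_eq_one hn.ne' hy2))
  · rw [eq_pow_mul_aeval_tracePoly₂ hy0]
    exact mul_ne_zero (pow_ne_zero 4 hy0)
      (aeval_tracePoly₂_ne_zero (isIntegral_add_inv_of_pow_eq_one hn.ne' hy))
end
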